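/- arXiv:2307.13271 — 4 statements merged into one kernel-verified Lean document; each statement's English description precedes it below -/
import Mathlib

section
/- Let G be a simple graph and σ ⊆ V(G). If every 3-element subset of σ is a simplex of F_1(G) (i.e., induces a forest with maximum degree ≤ 1), then σ itself is a simplex of F_1(G). -/
/-! A set spans a simplex of `F_1(G)` exactly when every vertex of it has at most one neighbour
inside it: a graph of maximum degree at most one has no cycle, since a cycle leaves its base
vertex towards two different neighbours. Having two neighbours `u ≠ w` of `v` inside `σ` is
witnessed by the triple `{v, u, w}` alone. -/

/-- A finite vertex set spans a simplex of the `d`-forest complex if it induces an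
acyclic subgraph all of whose vertices have at most `d` neighbours inside the set
(`d = ⊤` imposes no degree bound, giving `F_∞`). -/
def forestSimplex {V : Type*} (G : SimpleGraph V) (d : ℕ∞) (σ : Finset V) : Prop :=
  (SimpleGraph.induce (σ : Set V) G).IsAcyclic ∧
    ∀ v ∈ σ, (({u | u ∈ σ ∧ G.Adj v u} : Set V).ncard : ℕ∞) ≤ d

/-- The `d`-forest complex `F_d(G)` of a graph `G`, as a set of finite simplices. -/
def forestComplex {V : Type*} (G : SimpleGraph V) (d : ℕ∞) : Set (Finset V) :=
  {σ | forestSimplex G d σ}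

theorem SimpleGraph.isAcyclic_of_neighborSet_subsingleton {V : Type*} {G : SimpleGraph V}
    (h : ∀ v, (G.neighborSet v).Subsingleton) : G.IsAcyclic := fun v _ hp =>
  hp.snd_ne_penultimate <|
    h v (Walk.adj_snd hp.not_nil) (Walk.adj_penultimate hp.not_nil).symm

theorem forestSimplex_one_iff {V : Type*} {G : SimpleGraph V} {σ : Finset V} :
    forestSimplex G 1 σ ↔ ∀ v ∈ σ, {u | u ∈ σ ∧ G.Adj v u}.Subsingleton := by
  have hdeg : ∀ v, (({u | u ∈ σ ∧ G.Adj v u} : Set V).ncard : ℕ∞) ≤ 1 ↔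
      {u | u ∈ σ ∧ G.Adj v u}.Subsingleton := fun v => by
    have : Finite {u | u ∈ σ ∧ G.Adj v u} := (σ.finite_toSet.subset fun _ hu => hu.1).to_subtype
    rw [Nat.cast_le_one, Set.ncard_le_one_iff_subsingleton]
  refine ⟨fun h v hv => (hdeg v).mp (h.2 v hv), fun h => ⟨?_, fun v hv => (hdeg v).mpr (h v hv)⟩⟩
  exact SimpleGraph.isAcyclic_of_neighborSet_subsingleton fun a b hb c hc =>
    Subtype.ext (h a a.2 ⟨b.2, hb⟩ ⟨c.2, hc⟩)

/-- If every `3`-element subset of `σ` is a simplex of `F_1(G)`, then `σ` itself is a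
simplex of `F_1(G)`. -/
theorem mem_forestComplex_one_of_triples {V : Type*} (G : SimpleGraph V) (σ : Finset V)
    (h : ∀ τ ⊆ σ, τ.card = 3 → τ ∈ forestComplex G 1) :
    σ ∈ forestComplex G 1 := by
  classical
  refine forestSimplex_one_iff.mpr fun v hv u ⟨hu, hvu⟩ w ⟨hw, hvw⟩ => ?_
  by_contra hne
  have hτ : ({v, u, w} : Finset V) ∈ forestComplex G 1 :=
    h _ (by simp [Finset.insert_subset_iff, *])
      (Finset.card_eq_three.mpr ⟨v, u, w, hvu.ne, hvw.ne, hne, rfl⟩)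
  exact hne (forestSimplex_one_iff.mp hτ v (by simp) ⟨by simp, hvu⟩ ⟨by simp, hvw⟩)
end

section
/- If v is a vertex of a graph G contained in no cycle of G, then F_∞(G) is a cone with apex v, hence contractible; in particular F_∞(G) = {v} * F_∞(G − v). -/
/-- The geometric realization of a simplicial complex on a finite vertex set. -/
abbrev realization {V : Type*} [Fintype V] (K : Set (Finset V)) : Type _ :=
  { f : V → ℝ // (∀ v, 0 ≤ f v) ∧ (∑ v, f v) = 1 ∧ ∃ σ ∈ K, {v | f v ≠ 0} ⊆ ↑σ }

/-- The `q`-dimensional sphere. -/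
abbrev Sphere (q : ℕ) : Type := ↥(Metric.sphere (0 : EuclideanSpace ℝ (Fin (q+1))) 1)

/-- A base point of the `q`-sphere. -/
noncomputable abbrev spherePt (q : ℕ) : Sphere q :=
  ⟨EuclideanSpace.single 0 1, by simp [EuclideanSpace.norm_single]⟩

/-- The wedge of `k` copies of the `q`-sphere (a point if `k = 0`), as a quotient of
the disjoint union of a point and `k` spheres identifying the base points. -/
noncomputable abbrev Wedge (k q : ℕ) : Type :=
  Quot (fun x y : Unit ⊕ (Fin k × Sphere q) =>
    (x = Sum.inl () ∨ ∃ i, x = Sum.inr (i, spherePt q)) ∧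
    (y = Sum.inl () ∨ ∃ i, y = Sum.inr (i, spherePt q)))

/-!
A cycle through a vertex set `insert v σ` that avoids `v` already lies in `σ`, so adding a
vertex on no cycle to an acyclic induced subgraph keeps it acyclic: `F_∞(G)` is a cone with
apex `v`. The geometric realization of a cone is star-convex about its apex in `V → ℝ`,
hence contractible by the straight-line homotopy.
-/

namespace SimpleGraph

variable {V : Type*} {G : SimpleGraph V} {s : Set V}

theorem isAcyclic_induce_iff :
    (G.induce s).IsAcyclic ↔
      ∀ (u : V) (c : G.Walk u u), c.IsCycle → ¬ ∀ x ∈ c.support, x ∈ s := by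
  have hinj : Function.Injective (Embedding.induce (G := G) s).toHom := Subtype.val_injective
  constructor
  · intro hs u c hc hcs
    refine hs (c.induce s hcs) ?_
    rwa [← Walk.isCycle_map_iff_of_injective hinj, Walk.map_induce]
  · intro h u c hc
    refine h _ _ (hc.map hinj) ?_
    simp only [Walk.support_map, List.mem_map]
    rintro _ ⟨y, -, rfl⟩
    exact y.2

theorem isAcyclic_induce_insert {v : V}
    (hv : ∀ (u : V) (c : G.Walk u u), c.IsCycle → v ∉ c.support)
    (hs : (G.induce s).IsAcyclic) : (G.induce (insert v s)).IsAcyclic := by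
  rw [isAcyclic_induce_iff] at hs ⊢
  intro u c hc hcs
  exact hs u c hc fun x hx => (hcs x hx).resolve_left (by rintro rfl; exact hv u c hc hx)

end SimpleGraph

section ForestComplex

variable {V : Type*} (G : SimpleGraph V)

theorem empty_mem_forestComplex (d : ℕ∞) : ∅ ∈ forestComplex G d :=
  ⟨fun u => by simpa using u.2, by simp⟩

theorem insert_mem_forestComplex_top [DecidableEq V] {v : V}
    (hv : ∀ (u : V) (c : G.Walk u u), c.IsCycle → v ∉ c.support) {σ : Finset V}
    (hσ : σ ∈ forestComplex G ⊤) : insert v σ ∈ forestComplex G ⊤ :=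
  ⟨by rw [Finset.coe_insert]; exact SimpleGraph.isAcyclic_induce_insert hv hσ.1,
    fun _ _ => le_top⟩

end ForestComplex

section Realization

variable {V : Type*} [Fintype V] [DecidableEq V] {K : Set (Finset V)} {v : V}

theorem starConvex_realization_of_cone (hK : ∀ σ ∈ K, insert v σ ∈ K) :
    StarConvex ℝ (Pi.single v 1)
      {f : V → ℝ | (∀ u, 0 ≤ f u) ∧ ∑ u, f u = 1 ∧ ∃ σ ∈ K, {u | f u ≠ 0} ⊆ ↑σ} := by
  have hsingle : (0 : V → ℝ) ≤ Pi.single v 1 := Pi.single_nonneg.2 zero_le_one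
  rintro f ⟨hf0, hf1, σ, hσK, hσ⟩ a b ha hb hab
  refine ⟨fun u => ?_, ?_, insert v σ, hK σ hσK, fun u hu => ?_⟩
  · exact add_nonneg (mul_nonneg ha (hsingle u)) (mul_nonneg hb (hf0 u))
  · simp [Finset.sum_add_distrib, ← Finset.mul_sum, hf1, hab]
  · rcases eq_or_ne u v with rfl | huv
    · exact Finset.mem_insert_self _ _
    · have hfu : f u ≠ 0 := fun h0 => hu (by simp [huv, h0])
      exact Finset.mem_insert_of_mem (hσ hfu)

theorem contractibleSpace_realization_of_cone (hK : ∀ σ ∈ K, insert v σ ∈ K)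
    (hne : K.Nonempty) : ContractibleSpace (realization K) := by
  obtain ⟨σ, hσ⟩ := hne
  have hsingle : (0 : V → ℝ) ≤ Pi.single v 1 := Pi.single_nonneg.2 zero_le_one
  refine (starConvex_realization_of_cone hK).contractibleSpace
    ⟨Pi.single v 1, hsingle, by simp, insert v σ, hK σ hσ, Pi.support_single_subset.trans ?_⟩
  simp

end Realization

/-- If the vertex `v` lies on no cycle of `G`, then `F_∞(G)` is a cone with apex `v`
(equivalently `F_∞(G) = {v} * F_∞(G − v)`), hence contractible. -/
theorem forestComplex_cone_of_no_cycle {V : Type*} [Fintype V] [DecidableEq V]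
    (G : SimpleGraph V) (v : V)
    (h : ∀ (u : V) (c : G.Walk u u), c.IsCycle → v ∉ c.support) :
    (∀ σ ∈ forestComplex G ⊤, insert v σ ∈ forestComplex G ⊤) ∧
      ContractibleSpace (realization (forestComplex G ⊤)) :=
  have cone : ∀ σ ∈ forestComplex G ⊤, insert v σ ∈ forestComplex G ⊤ :=
    fun _ => insert_mem_forestComplex_top G h
  ⟨cone, contractibleSpace_realization_of_cone cone ⟨∅, empty_mem_forestComplex G ⊤⟩⟩
end

section
/- Let G be a graph on n vertices with finite girth g(G). Then the reduced homology H̃_i(F_∞(G)) vanishes for all i < g(G) − 2. -/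
/-- The boundary map of the augmented ordered simplicial chain complex on the vertex
type `V` : chains generated by `(q+1)`-tuples map to chains generated by `q`-tuples.
(For `q = 0` this is the augmentation map.) -/
noncomputable def orderedBoundary (V : Type*) (q : ℕ) :
    ((Fin (q+1) → V) →₀ ℤ) →ₗ[ℤ] ((Fin q → V) →₀ ℤ) :=
  Finsupp.lift _ ℤ _
    (fun g => ∑ i : Fin (q+1), ((-1 : ℤ)^(i : ℕ)) • Finsupp.single (g ∘ i.succAbove) 1)

/-- Ordered chains supported on tuples whose vertex set is a simplex of `K`. -/
noncomputable def orderedChains {V : Type*} [DecidableEq V] (K : Set (Finset V)) (q : ℕ) :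
    Submodule ℤ ((Fin q → V) →₀ ℤ) :=
  Finsupp.supported ℤ ℤ {g | Finset.image g Finset.univ ∈ K}

/-- Reduced cycles of the complex `K` in dimension `q` (chains on `q+1` vertices; for
`q = 0` the boundary is the augmentation, so this yields *reduced* homology below). -/
noncomputable def reducedCycles {V : Type*} [DecidableEq V] (K : Set (Finset V)) (q : ℕ) :
    Submodule ℤ ((Fin (q+1) → V) →₀ ℤ) :=
  orderedChains K (q+1) ⊓ LinearMap.ker (orderedBoundary V q)

/-- Boundaries of the complex `K` in dimension `q`. -/
noncomputable def reducedBoundaries {V : Type*} [DecidableEq V] (K : Set (Finset V)) (q : ℕ) :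
    Submodule ℤ ((Fin (q+1) → V) →₀ ℤ) :=
  Submodule.map (orderedBoundary V (q+1)) (orderedChains K (q+2))

/-- The `q`-th reduced simplicial homology group (with integer coefficients) of the
complex `K`, via the ordered simplicial chain complex. -/
noncomputable abbrev reducedHomology {V : Type*} [DecidableEq V] (K : Set (Finset V))
    (q : ℕ) : Type _ :=
  (reducedCycles K q) ⧸
    (Submodule.comap (reducedCycles K q).subtype (reducedBoundaries K q))

/-!
Every set of at most `g(G) - 1` vertices induces a forest, since a cycle through its vertices would
be shorter than the girth. So for `i < g(G) - 2` the complex `F_∞(G)` contains every simplex of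
dimension at most `i + 1` on the vertex set, and the cone over any vertex contracts each `i`-cycle:
with `C` the cone operator, `∂ C + C ∂ = id` turns a cycle `z` into the boundary `∂ (C z)`.
-/

namespace SimpleGraph

variable {V : Type*} {G : SimpleGraph V}

lemma Walk.IsCycle.length_le_card [Fintype V] {u : V} {c : G.Walk u u} (hc : c.IsCycle) :
    c.length ≤ Fintype.card V := by
  rw [← Walk.length_tail_add_one hc.not_nil]
  exact hc.isPath_tail.length_lt

lemma induce_isAcyclic_of_card_lt_egirth (s : Finset V) (hs : (s.card : ℕ∞) < G.egirth) :
    (G.induce (s : Set V)).IsAcyclic := by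
  intro v c hc
  let f := Embedding.induce (G := G) (s : Set V)
  have hle : G.egirth ≤ c.length := by
    rw [← Walk.length_map f.toHom]
    exact G.egirth_le_length (hc.map f.injective)
  have hcard : c.length ≤ s.card := by simpa using hc.length_le_card
  exact hs.not_ge (hle.trans (by exact_mod_cast hcard))

end SimpleGraph

section OrderedChains

variable {V : Type*}

noncomputable def orderedCone (v : V) (q : ℕ) :
    ((Fin q → V) →₀ ℤ) →ₗ[ℤ] ((Fin (q + 1) → V) →₀ ℤ) :=
  Finsupp.lmapDomain ℤ ℤ fun g => (Fin.cons v g : Fin (q + 1) → V)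

lemma orderedBoundary_single (q : ℕ) (g : Fin (q + 1) → V) :
    orderedBoundary V q (Finsupp.single g 1) =
      ∑ i : Fin (q + 1), ((-1 : ℤ) ^ (i : ℕ)) • Finsupp.single (g ∘ i.succAbove) 1 := by
  simp [orderedBoundary]

lemma orderedBoundary_comp_orderedCone_add (v : V) (q : ℕ) :
    (orderedBoundary V (q + 1)).comp (orderedCone v (q + 1))
      + (orderedCone v q).comp (orderedBoundary V q) = LinearMap.id := by
  refine Finsupp.lhom_ext' fun g => LinearMap.ext_ring ?_
  have hface (j : Fin (q + 1)) :
      (Fin.cons v g : Fin (q + 2) → V) ∘ j.succ.succAbove = Fin.cons v (g ∘ j.succAbove) :=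
    Fin.cons_comp_succ_succAbove v g j
  simp only [LinearMap.comp_apply, LinearMap.add_apply, Finsupp.lsingle_apply,
    LinearMap.id_apply, orderedCone, Finsupp.lmapDomain_apply, Finsupp.mapDomain_single,
    orderedBoundary_single]
  rw [Fin.sum_univ_succ]
  simp only [Fin.succAbove_zero, Fin.cons_comp_succ, hface, Fin.val_zero, Fin.val_succ,
    pow_zero, pow_succ, one_smul, mul_neg_one, neg_smul, Finsupp.mapDomain_finsetSum,
    Finsupp.mapDomain_smul, Finsupp.mapDomain_single, Finset.sum_neg_distrib]
  rw [add_assoc, neg_add_cancel, add_zero]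

variable [DecidableEq V]

lemma reducedHomology_subsingleton_of_card_le_mem {K : Set (Finset V)} {q : ℕ}
    (hK : ∀ s : Finset V, s.card ≤ q + 2 → s ∈ K) : Subsingleton (reducedHomology K q) := by
  rw [Submodule.Quotient.subsingleton_iff, eq_top_iff]
  rintro ⟨x, -, hx⟩ -
  rcases isEmpty_or_nonempty V with _ | ⟨⟨v⟩⟩
  · simp [Subsingleton.elim x 0]
  · refine ⟨orderedCone v (q + 1) x, fun g _ => hK _ ?_, ?_⟩
    · simpa using (Finset.univ : Finset (Fin (q + 2))).card_image_le (f := g)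
    · simpa [LinearMap.mem_ker.mp hx] using
        LinearMap.congr_fun (orderedBoundary_comp_orderedCone_add v q) x

end OrderedChains

theorem homology_vanish_below_girth_general {V : Type*} [DecidableEq V]
    (G : SimpleGraph V) (i : ℕ) (hi : (i : ℕ∞) + 2 < G.egirth) :
    Subsingleton (reducedHomology (forestComplex G ⊤) i) := by
  refine reducedHomology_subsingleton_of_card_le_mem fun s hs => ⟨?_, fun _ _ => le_top⟩
  exact G.induce_isAcyclic_of_card_lt_egirth s (lt_of_le_of_lt (by exact_mod_cast hs) hi)

/-- For a graph `G` on finitely many vertices with finite girth, the reduced homology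
`H̃_i(F_∞(G))` vanishes for all `i < g(G) − 2`. -/
theorem homology_vanish_below_girth {V : Type*} [Fintype V] [DecidableEq V]
    (G : SimpleGraph V) (hg : G.egirth ≠ ⊤) (i : ℕ) (hi : (i : ℕ∞) + 2 < G.egirth) :
    Subsingleton (reducedHomology (forestComplex G ⊤) i) :=
  homology_vanish_below_girth_general G i hi
end

section
/- The complex F_1(P_n) of the path on n vertices is homotopy equivalent to: S^{2r−1} if n = 4r; a point if n = 4r+1 or n = 4r+2; and S^{2r+1} if n = 4r+3. -/
/-! A set of vertices of `P_n` is a face of `F_1(P_n)` iff it contains no three consecutive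
vertices. Once `4j - 1` is gone, vertex `4j + 3` is dominated by `4j` (every face containing it
stays a face after adding `4j`), and deleting a dominated vertex is a strong collapse: pushing the
mass of the deleted vertex onto its dominator is a deformation retraction of the realization.
Deleting `3, 7, 11, …` in turn leaves, for `n ≡ 1, 2 (mod 4)`, a cone with apex `4⌊n/4⌋`, and,
for `n ≡ 0, 3 (mod 4)`, the join of `(n + 1)/4` boundaries of triangles on the blocks
`{4k, 4k+1, 4k+2}`. A join of `m` boundaries of `d`-simplices is an `(md - 1)`-sphere: on the cone
over it the coordinates `t_{j+1} - t_0` of the blocks form a linear bijection onto `ℝ^{md}`, and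
normalising turns this into a homeomorphism of the realization onto the unit sphere. -/

open Finset Function
open scoped ContinuousMap

section Realization

variable {V : Type*}

def realizationCone (K : Set (Finset V)) : Set (V → ℝ) :=
  {f | (∀ v, 0 ≤ f v) ∧ ∃ σ ∈ K, {v | f v ≠ 0} ⊆ ↑σ}

theorem realization.val_mem_realizationCone [Fintype V] {K : Set (Finset V)}
    (x : realization K) : x.1 ∈ realizationCone K :=
  ⟨x.2.1, x.2.2.2⟩

theorem smul_mem_realizationCone {K : Set (Finset V)} {c : ℝ} (hc : 0 ≤ c) {f : V → ℝ}
    (hf : f ∈ realizationCone K) : c • f ∈ realizationCone K := by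
  obtain ⟨hf, σ, hσ, hfσ⟩ := hf
  exact ⟨fun v => mul_nonneg hc (hf v), σ, hσ,
    support_subset_iff'.2 fun v hv => by simp [support_subset_iff'.1 hfσ _ hv]⟩

variable [Fintype V]

instance (K : Set (Finset V)) : CompactSpace (realization K) := by
  have hclosed : IsClosed {f : V → ℝ | ∃ σ ∈ K, {v | f v ≠ 0} ⊆ ↑σ} := by
    have : {f : V → ℝ | ∃ σ ∈ K, {v | f v ≠ 0} ⊆ ↑σ} =
        ⋃ σ ∈ K, ⋂ (v) (_ : v ∉ σ), {f | f v = 0} := by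
      ext f
      simp only [Set.mem_ofPred_eq, Set.mem_iUnion, Set.mem_iInter, exists_prop]
      exact exists_congr fun σ => and_congr_right fun _ => support_subset_iff'
    rw [this]
    exact K.toFinite.isClosed_biUnion fun σ _ => isClosed_iInter fun v =>
      isClosed_iInter fun _ => isClosed_eq (continuous_apply v) continuous_const
  have hcompact : IsCompact
      {f : V → ℝ | (∀ v, 0 ≤ f v) ∧ (∑ v, f v) = 1 ∧ ∃ σ ∈ K, {v | f v ≠ 0} ⊆ ↑σ} := by
    convert (isCompact_stdSimplex ℝ V).inter_right hclosed using 1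
    ext f
    simp only [stdSimplex, Set.mem_inter_iff, Set.mem_ofPred_eq, and_assoc]
  exact isCompact_iff_compactSpace.mp hcompact

theorem realization.homotopic_of_contiguous {X : Type*} [TopologicalSpace X]
    {K : Set (Finset V)} (φ ψ : C(X, realization K))
    (h : ∀ x, ∃ σ ∈ K, ∀ v ∉ σ, (φ x).1 v = 0 ∧ (ψ x).1 v = 0) : φ.Homotopic ψ := by
  have hmem : ∀ (t : unitInterval) (x : X),
      let f := fun v => (1 - (t : ℝ)) * (φ x).1 v + t * (ψ x).1 v
      (∀ v, 0 ≤ f v) ∧ (∑ v, f v) = 1 ∧ ∃ σ ∈ K, {v | f v ≠ 0} ⊆ ↑σ := by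
    intro t x
    obtain ⟨hφ, hφsum, -⟩ := (φ x).2
    obtain ⟨hψ, hψsum, -⟩ := (ψ x).2
    obtain ⟨σ, hσ, hsupp⟩ := h x
    refine ⟨fun v => add_nonneg (mul_nonneg (sub_nonneg.2 t.2.2) (hφ v)) (mul_nonneg t.2.1 (hψ v)),
      ?_, σ, hσ, support_subset_iff'.2 fun v hv => ?_⟩
    · rw [sum_add_distrib, ← mul_sum, ← mul_sum, hφsum, hψsum]
      ring
    · simp [(hsupp v hv).1, (hsupp v hv).2]
  refine ⟨⟨⟨fun p => ⟨_, hmem p.1 p.2⟩, ?_⟩, fun x => ?_, fun x => ?_⟩⟩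
  · refine Continuous.subtype_mk (continuous_pi fun v => ?_) _
    have hφ : Continuous fun x => (φ x).1 v :=
      (continuous_apply v).comp (continuous_subtype_val.comp φ.continuous)
    have hψ : Continuous fun x => (ψ x).1 v :=
      (continuous_apply v).comp (continuous_subtype_val.comp ψ.continuous)
    fun_prop
  all_goals ext v; simp

theorem realization.contractibleSpace_of_cone [DecidableEq V] {K : Set (Finset V)} (w : V)
    (hw : ∀ σ ∈ K, insert w σ ∈ K) (hK : K.Nonempty) : ContractibleSpace (realization K) := by
  obtain ⟨σ₀, hσ₀⟩ := hK
  have hsupp : ∀ σ : Finset V, ∀ v ∉ insert w σ, (Pi.single w 1 : V → ℝ) v = 0 := fun σ v hv =>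
    Pi.single_eq_of_ne (ne_of_mem_of_not_mem (mem_insert_self w σ) hv).symm 1
  let apex : realization K := ⟨Pi.single w 1, fun v => by by_cases h : v = w <;> simp [h], by simp,
    insert w σ₀, hw σ₀ hσ₀, support_subset_iff'.2 (hsupp σ₀)⟩
  refine (contractible_iff_id_nullhomotopic _).2 ⟨apex, realization.homotopic_of_contiguous _ _
    fun x => ?_⟩
  obtain ⟨σ, hσ, hxσ⟩ := x.2.2.2
  exact ⟨insert w σ, hw σ hσ, fun v hv =>
    ⟨support_subset_iff'.1 hxσ _ fun h => hv (mem_insert_of_mem h), hsupp σ v hv⟩⟩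

end Realization

section Deletion

variable {V : Type*} [DecidableEq V] {K : Set (Finset V)} {u v : V}

def deleteVertex (K : Set (Finset V)) (v : V) : Set (Finset V) := {σ ∈ K | v ∉ σ}

def pushMass (u v : V) (f : V → ℝ) : V → ℝ := f + f v • (Pi.single u 1 - Pi.single v 1)

theorem continuous_pushMass : Continuous (pushMass u v) := by
  unfold pushMass; fun_prop

theorem pushMass_apply (huv : u ≠ v) (f : V → ℝ) (x : V) :
    pushMass u v f x = if x = v then 0 else if x = u then f u + f v else f x := by
  by_cases hxv : x = v
  · subst hxv; simp [pushMass, huv.symm]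
  · by_cases hxu : x = u
    · subst hxu; simp [pushMass, huv]
    · simp [pushMass, hxu, hxv]

theorem pushMass_of_eq_zero {f : V → ℝ} (hf : f v = 0) : pushMass u v f = f := by
  simp [pushMass, hf]

variable [Fintype V]

theorem sum_pushMass (f : V → ℝ) : ∑ x, pushMass u v f x = ∑ x, f x := by
  simp [pushMass, sum_add_distrib, ← mul_sum, sum_sub_distrib]

theorem exists_simplex_pushMass (huv : u ≠ v) (hdom : ∀ σ ∈ K, v ∈ σ → insert u σ ∈ K)
    (x : realization K) :
    ∃ τ ∈ K, (∀ y ∉ τ, x.1 y = 0) ∧ ∀ y ∉ τ.erase v, pushMass u v x.1 y = 0 := by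
  obtain ⟨σ, hσ, hxσ⟩ := x.2.2.2
  have hx : ∀ y ∉ σ, x.1 y = 0 := fun y hy => support_subset_iff'.1 hxσ _ hy
  by_cases hv : v ∈ σ
  · refine ⟨insert u σ, hdom σ hσ hv, fun y hy => hx y fun h => hy (mem_insert_of_mem h),
      fun y hy => ?_⟩
    rw [pushMass_apply huv]
    simp only [mem_erase, mem_insert, not_and_or, not_or, not_not] at hy
    rcases hy with rfl | ⟨hyu, hyσ⟩
    · simp
    · simp [hyu, hx y hyσ]
  · refine ⟨σ, hσ, hx, fun y hy => ?_⟩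
    rw [pushMass_of_eq_zero (hx v hv)]
    exact hx y fun h => hy (mem_erase.2 ⟨by rintro rfl; exact hv h, h⟩)

theorem realization.nonempty_homotopyEquiv_deleteVertex (huv : u ≠ v) (hK : IsLowerSet K)
    (hdom : ∀ σ ∈ K, v ∈ σ → insert u σ ∈ K) :
    Nonempty (realization K ≃ₕ realization (deleteVertex K v)) := by
  have hpush := exists_simplex_pushMass huv hdom
  have hnonneg (x : realization K) (y : V) : 0 ≤ pushMass u v x.1 y := by
    rw [pushMass_apply huv]
    split_ifs
    exacts [le_rfl, add_nonneg (x.2.1 u) (x.2.1 v), x.2.1 y]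
  have hsimplex (x : realization K) :
      ∃ σ ∈ deleteVertex K v, {y | pushMass u v x.1 y ≠ 0} ⊆ ↑σ := by
    obtain ⟨τ, hτ, -, hpτ⟩ := hpush x
    exact ⟨τ.erase v, ⟨hK (erase_subset v τ) hτ, notMem_erase v τ⟩, support_subset_iff'.2 hpτ⟩
  let retract : C(realization K, realization (deleteVertex K v)) :=
    ⟨fun x => ⟨pushMass u v x.1, hnonneg x, by rw [sum_pushMass, x.2.2.1], hsimplex x⟩,
      (continuous_pushMass.comp continuous_subtype_val).subtype_mk _⟩
  let incl : C(realization (deleteVertex K v), realization K) :=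
    ⟨fun x => ⟨x.1, x.2.1, x.2.2.1, x.2.2.2.imp fun _ h => ⟨h.1.1, h.2⟩⟩,
      continuous_subtype_val.subtype_mk _⟩
  refine ⟨⟨retract, incl, ?_, ?_⟩⟩
  · refine (realization.homotopic_of_contiguous _ _ fun x => ?_).symm
    obtain ⟨τ, hτ, hxτ, hpτ⟩ := hpush x
    exact ⟨τ, hτ, fun y hy => ⟨hxτ y hy, hpτ y fun h => hy (erase_subset v τ h)⟩⟩
  · have hretract : retract.comp incl = ContinuousMap.id _ := by
      ext x y
      obtain ⟨σ, ⟨-, hvσ⟩, hxσ⟩ := x.2.2.2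
      exact congrFun (pushMass_of_eq_zero (support_subset_iff'.1 hxσ _ hvσ)) y
    exact hretract ▸ ContinuousMap.Homotopic.refl _

end Deletion

section Sphere

variable {V : Type*} [Fintype V]

theorem realization.nonempty_homeomorph_sphere_of_bijOn {W : Type*} [NormedAddCommGroup W]
    [NormedSpace ℝ W] {K : Set (Finset V)} (w : (V → ℝ) →ₗ[ℝ] W)
    (hw : Set.BijOn w (realizationCone K) Set.univ) :
    Nonempty (realization K ≃ₜ Metric.sphere (0 : W) 1) := by
  have hcone := realization.val_mem_realizationCone (K := K)
  have hne (x : realization K) : w x.1 ≠ 0 := by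
    intro h
    have hzero : (0 : V → ℝ) ∈ realizationCone K := by
      simpa using smul_mem_realizationCone le_rfl (hcone x)
    have hx : x.1 = 0 := hw.injOn (hcone x) hzero (by rw [h, map_zero])
    simpa [hx] using x.2.2.1
  let Φ : realization K → Metric.sphere (0 : W) 1 :=
    fun x => ⟨‖w x.1‖⁻¹ • w x.1, by simp [norm_smul, hne x]⟩
  have hΦ : Continuous Φ := by
    have hwc : Continuous fun x : realization K => w x.1 :=
      w.continuous_of_finiteDimensional.comp continuous_subtype_val
    exact ((hwc.norm.inv₀ fun x => norm_ne_zero_iff.2 (hne x)).smul hwc).subtype_mk _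
  have hinj : Injective Φ := by
    intro x y hxy
    have hx := inv_pos.2 (norm_pos_iff.2 (hne x))
    have hy := inv_pos.2 (norm_pos_iff.2 (hne y))
    have hscaled : ‖w x.1‖⁻¹ • x.1 = ‖w y.1‖⁻¹ • y.1 :=
      hw.injOn (smul_mem_realizationCone hx.le (hcone x))
        (smul_mem_realizationCone hy.le (hcone y))
        (by simpa [map_smul, Φ] using congrArg Subtype.val hxy)
    have hsum := congrArg (fun f : V → ℝ => ∑ v, f v) hscaled
    simp only [Pi.smul_apply, smul_eq_mul, ← mul_sum, x.2.2.1, y.2.2.1, mul_one] at hsum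
    rw [hsum] at hscaled
    exact Subtype.ext (smul_right_injective _ hy.ne' hscaled)
  have hsurj : Surjective Φ := by
    intro z
    obtain ⟨g, ⟨hg, σ, hσ, hgσ⟩, hgz⟩ := hw.surjOn (Set.mem_univ z.1)
    have hS : 0 < ∑ v, g v := by
      refine (sum_nonneg fun v _ => hg v).lt_of_ne fun h => ?_
      have hg0 : g = 0 := funext fun v =>
        (sum_eq_zero_iff_of_nonneg fun v _ => hg v).1 h.symm v (mem_univ v)
      simpa [hg0, ← hgz] using z.2
    refine ⟨⟨(∑ v, g v)⁻¹ • g, fun v => mul_nonneg (inv_nonneg.2 hS.le) (hg v), ?_, σ, hσ,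
      support_subset_iff'.2 fun v hv => by simp [support_subset_iff'.1 hgσ _ hv]⟩, ?_⟩
    · simp [← mul_sum, hS.ne']
    · have hz : ‖z.1‖ = 1 := norm_eq_of_mem_sphere z
      ext1
      simp [Φ, map_smul, hgz, norm_smul, hz, abs_of_pos hS, smul_smul, hS.ne']
  exact ⟨hΦ.homeoOfEquivCompactToT2 (f := Equiv.ofBijective Φ ⟨hinj, hsurj⟩)⟩

theorem EuclideanSpace.nonempty_homeomorph_sphere_of_card_eq {ι ι' : Type*} [Fintype ι]
    [Fintype ι']
    (h : Fintype.card ι = Fintype.card ι') :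
    Nonempty (Metric.sphere (0 : EuclideanSpace ℝ ι) 1 ≃ₜ
      Metric.sphere (0 : EuclideanSpace ℝ ι') 1) :=
  let e := LinearIsometryEquiv.piLpCongrLeft 2 ℝ ℝ (Fintype.equivOfCardEq h)
  ⟨e.toHomeomorph.subtype fun x => by simp⟩

end Sphere

section SimplexBoundaryJoin

variable {V ι : Type*} {d : ℕ}

/-- Inverse of `t ↦ (t j.succ - t 0)_j` on the cone over `∂Δ^d`: the nonnegative vector with a
zero coordinate having the given differences to coordinate `0`. -/
noncomputable def simplexLift (p : Fin d → ℝ) : Fin (d + 1) → ℝ :=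
  fun j => Matrix.vecCons 0 p j - univ.inf' univ_nonempty (Matrix.vecCons 0 p)

theorem simplexLift_nonneg (p : Fin d → ℝ) (j : Fin (d + 1)) : 0 ≤ simplexLift p j :=
  sub_nonneg.2 (inf'_le _ (mem_univ j))

theorem exists_simplexLift_eq_zero (p : Fin d → ℝ) : ∃ j, simplexLift p j = 0 := by
  obtain ⟨j, -, hj⟩ := exists_mem_eq_inf' univ_nonempty (Matrix.vecCons (0 : ℝ) p)
  exact ⟨j, by simp [simplexLift, hj]⟩

theorem simplexLift_succ_sub_zero (p : Fin d → ℝ) (j : Fin d) :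
    simplexLift p j.succ - simplexLift p 0 = p j := by
  simp [simplexLift]

theorem simplexLift_sub_zero {t : Fin (d + 1) → ℝ} (ht : ∀ j, 0 ≤ t j) (h0 : ∃ j, t j = 0) :
    simplexLift (fun j => t j.succ - t 0) = t := by
  have hcons : Matrix.vecCons 0 (fun j => t j.succ - t 0) = fun j => t j - t 0 := by
    funext j
    cases j using Fin.cases <;> simp
  obtain ⟨j₀, hj₀⟩ := h0
  have hinf : univ.inf' univ_nonempty (fun j => t j - t 0) = -t 0 :=
    le_antisymm ((inf'_le _ (mem_univ j₀)).trans_eq (by simp [hj₀]))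
      (le_inf' _ _ fun j _ => by linarith [ht j])
  funext j
  simp [simplexLift, hcons, hinf]

def simplexBoundaryJoin (β : ι × Fin (d + 1) → V) : Set (Finset V) :=
  {σ | ↑σ ⊆ Set.range β ∧ ∀ i, ∃ j, β (i, j) ∉ σ}

theorem mem_realizationCone_simplexBoundaryJoin [Fintype V] {β : ι × Fin (d + 1) → V}
    {f : V → ℝ} : f ∈ realizationCone (simplexBoundaryJoin β) ↔
      (∀ v, 0 ≤ f v) ∧ (∀ v ∉ Set.range β, f v = 0) ∧ ∀ i, ∃ j, f (β (i, j)) = 0 := by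
  classical
  constructor
  · rintro ⟨hf, σ, ⟨hσβ, hσ⟩, hfσ⟩
    refine ⟨hf, fun v hv => support_subset_iff'.1 hfσ _ fun h => hv (hσβ h), fun i => ?_⟩
    obtain ⟨j, hj⟩ := hσ i
    exact ⟨j, support_subset_iff'.1 hfσ _ hj⟩
  · rintro ⟨hf, hβ, hzero⟩
    refine ⟨hf, univ.filter (f · ≠ 0), ⟨fun v hv => ?_, fun i => ?_⟩, fun v hv => by simpa⟩
    · by_contra h
      simp [hβ v h] at hv
    · obtain ⟨j, hj⟩ := hzero i
      exact ⟨j, by simp [hj]⟩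

namespace simplexBoundaryJoin

def coords [Fintype ι] (β : ι × Fin (d + 1) → V) :
    (V → ℝ) →ₗ[ℝ] EuclideanSpace ℝ (ι × Fin d) where
  toFun f := WithLp.toLp 2 fun p => f (β (p.1, p.2.succ)) - f (β (p.1, 0))
  map_add' f g := by ext; simp only [Pi.add_apply, PiLp.add_apply]; ring
  map_smul' c f := by
    ext
    simp only [Pi.smul_apply, PiLp.smul_apply, smul_eq_mul, RingHom.id_apply]
    ring

noncomputable def lift (β : ι × Fin (d + 1) → V) (z : EuclideanSpace ℝ (ι × Fin d)) : V → ℝ :=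
  Function.extend β (fun p => simplexLift (fun j => z (p.1, j)) p.2) 0

variable {β : ι × Fin (d + 1) → V}

theorem lift_apply (hβ : Injective β) (z : EuclideanSpace ℝ (ι × Fin d)) (p : ι × Fin (d + 1)) :
    lift β z (β p) = simplexLift (fun j => z (p.1, j)) p.2 :=
  hβ.extend_apply _ _ p

theorem coords_lift [Fintype ι] (hβ : Injective β) (z : EuclideanSpace ℝ (ι × Fin d)) :
    coords β (lift β z) = z := by
  ext p
  simp [coords, lift_apply hβ, simplexLift_succ_sub_zero]

theorem lift_mem_realizationCone [Fintype V] (hβ : Injective β) (z : EuclideanSpace ℝ (ι × Fin d)) :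
    lift β z ∈ realizationCone (simplexBoundaryJoin β) := by
  refine mem_realizationCone_simplexBoundaryJoin.2 ⟨fun v => ?_, fun v hv => ?_, fun i => ?_⟩
  · by_cases hv : v ∈ Set.range β
    · obtain ⟨p, rfl⟩ := hv
      exact (lift_apply hβ z p).symm ▸ simplexLift_nonneg _ _
    · simp [lift, Function.extend_apply' _ _ _ hv]
  · simp [lift, Function.extend_apply' _ _ _ hv]
  · obtain ⟨j, hj⟩ := exists_simplexLift_eq_zero fun j => z (i, j)
    exact ⟨j, (lift_apply hβ z (i, j)).trans hj⟩

theorem lift_coords [Fintype V] [Fintype ι] (hβ : Injective β) {f : V → ℝ}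
    (hf : f ∈ realizationCone (simplexBoundaryJoin β)) :
    lift β (coords β f) = f := by
  obtain ⟨hnonneg, hβf, hzero⟩ := mem_realizationCone_simplexBoundaryJoin.1 hf
  funext v
  by_cases hv : v ∈ Set.range β
  · obtain ⟨⟨i, j⟩, rfl⟩ := hv
    rw [lift_apply hβ]
    exact congrFun (simplexLift_sub_zero (t := fun j => f (β (i, j))) (fun j => hnonneg _)
      (hzero i)) j
  · simp [lift, Function.extend_apply' _ _ _ hv, hβf v hv]

end simplexBoundaryJoin

theorem realization.nonempty_homeomorph_sphere_simplexBoundaryJoin [Fintype V] [Fintype ι]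
    {β : ι × Fin (d + 1) → V} (hβ : Injective β) :
    Nonempty (realization (simplexBoundaryJoin β) ≃ₜ
      Metric.sphere (0 : EuclideanSpace ℝ (ι × Fin d)) 1) :=
  realization.nonempty_homeomorph_sphere_of_bijOn (simplexBoundaryJoin.coords β)
    (Set.InvOn.bijOn ⟨fun _ => simplexBoundaryJoin.lift_coords hβ,
        fun z _ => simplexBoundaryJoin.coords_lift hβ z⟩
      (Set.mapsTo_univ _ _) fun z _ => simplexBoundaryJoin.lift_mem_realizationCone hβ z)

end SimplexBoundaryJoin

section ForestComplex

variable {V : Type*} (G : SimpleGraph V)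

theorem SimpleGraph.isAcyclic_of_forall_adj_eq
    (h : ∀ v a b : V, G.Adj v a → G.Adj v b → a = b) : G.IsAcyclic := by
  intro v p hp
  match p, hp with
  | .nil, hp => exact SimpleGraph.Walk.not_isCycle_nil hp
  | .cons hva .nil, hp => exact G.loopless.irrefl v hva
  | .cons (v := b) hvb (.cons (v := c) hbc q), hp =>
    have hvc : v = c := h b v c hvb.symm hbc
    subst hvc
    have hnodup := hp.isCircuit.isTrail.edges_nodup
    simp only [SimpleGraph.Walk.edges_cons, List.nodup_cons] at hnodup
    exact hnodup.1 (List.mem_cons.2 (Or.inl Sym2.eq_swap))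

theorem isLowerSet_forestComplex (d : ℕ∞) : IsLowerSet (forestComplex G d) := by
  intro σ τ hτσ ⟨hacyclic, hdeg⟩
  refine ⟨hacyclic.embedding (G.induceHomOfLE (Finset.coe_subset.2 hτσ)), fun v hv => ?_⟩
  have hsub : ({u | u ∈ τ ∧ G.Adj v u} : Set V) ⊆ {u | u ∈ σ ∧ G.Adj v u} :=
    fun u hu => ⟨hτσ hu.1, hu.2⟩
  refine le_trans ?_ (hdeg v (hτσ hv))
  exact_mod_cast Set.ncard_le_ncard hsub (σ.finite_toSet.subset fun u hu => hu.1)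

theorem mem_forestComplex_one_iff {σ : Finset V} :
    σ ∈ forestComplex G 1 ↔ ∀ v ∈ σ, ∀ a ∈ σ, ∀ b ∈ σ, G.Adj v a → G.Adj v b → a = b := by
  have hfin (v : V) : ({u | u ∈ σ ∧ G.Adj v u} : Set V).Finite :=
    σ.finite_toSet.subset fun u hu => hu.1
  constructor
  · rintro ⟨-, hdeg⟩ v hv a ha b hb hva hvb
    have hcard : ({u | u ∈ σ ∧ G.Adj v u} : Set V).ncard ≤ 1 := by exact_mod_cast hdeg v hv
    exact (Set.ncard_le_one (hfin v)).1 hcard a ⟨ha, hva⟩ b ⟨hb, hvb⟩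
  · intro h
    refine ⟨SimpleGraph.isAcyclic_of_forall_adj_eq _ ?_, fun v hv => ?_⟩
    · rintro ⟨v, hv⟩ ⟨a, ha⟩ ⟨b, hb⟩ hva hvb
      exact Subtype.ext (h v hv a ha b hb hva hvb)
    · have : ({u | u ∈ σ ∧ G.Adj v u} : Set V).ncard ≤ 1 :=
        (Set.ncard_le_one (hfin v)).2 fun a ⟨ha, hva⟩ b ⟨hb, hvb⟩ => h v hv a ha b hb hva hvb
      exact_mod_cast this

theorem mem_forestComplex_one_pathGraph_iff {n : ℕ} {σ : Finset (Fin n)} :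
    σ ∈ forestComplex (SimpleGraph.pathGraph n) 1 ↔
      ∀ a ∈ σ, ∀ b ∈ σ, ∀ c ∈ σ, ¬(a.val + 1 = b.val ∧ b.val + 1 = c.val) := by
  simp only [mem_forestComplex_one_iff, SimpleGraph.pathGraph_adj]
  constructor
  · rintro h a ha b hb c hc ⟨hab, hbc⟩
    have := congrArg Fin.val (h b hb a ha c hc (Or.inr hab) (Or.inl hbc))
    omega
  · intro h v hv a ha b hb hva hvb
    refine Fin.ext ?_
    rcases hva with hva | hva <;> rcases hvb with hvb | hvb
    · omega
    · exact absurd ⟨hvb, hva⟩ (h b hb v hv a ha)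
    · exact absurd ⟨hva, hvb⟩ (h a ha v hv b hb)
    · omega

end ForestComplex

section PathGraph

open SimpleGraph

variable {n : ℕ}

def pathPruned (n j : ℕ) : Set (Finset (Fin n)) :=
  {σ ∈ forestComplex (pathGraph n) 1 | ∀ v ∈ σ, v.val % 4 = 3 → 4 * j ≤ v.val}

theorem pathPruned_zero : pathPruned n 0 = forestComplex (pathGraph n) 1 := by
  ext σ
  simp [pathPruned]

theorem mem_pathPruned_self {σ : Finset (Fin n)} :
    σ ∈ pathPruned n n ↔ σ ∈ forestComplex (pathGraph n) 1 ∧ ∀ v ∈ σ, v.val % 4 ≠ 3 :=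
  and_congr_right fun _ => forall₂_congr fun v _ => by omega

theorem isLowerSet_pathPruned (j : ℕ) : IsLowerSet (pathPruned n j) :=
  fun _ _ hτσ hσ => ⟨isLowerSet_forestComplex _ 1 hτσ hσ.1, fun v hv => hσ.2 v (hτσ hv)⟩

theorem pathPruned_succ {j : ℕ} (h : 4 * j + 3 < n) :
    pathPruned n (j + 1) = deleteVertex (pathPruned n j) ⟨4 * j + 3, h⟩ := by
  ext σ
  simp only [pathPruned, deleteVertex, Set.mem_ofPred_eq]
  constructor
  · rintro ⟨hσ, hmod⟩
    refine ⟨⟨hσ, fun v hv hv3 => by have := hmod v hv hv3; omega⟩, fun hmem => ?_⟩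
    have : 4 * (j + 1) ≤ 4 * j + 3 := hmod _ hmem (show (4 * j + 3) % 4 = 3 by omega)
    omega
  · rintro ⟨⟨hσ, hmod⟩, hnot⟩
    refine ⟨hσ, fun v hv hv3 => ?_⟩
    have hne : v.val ≠ 4 * j + 3 := fun he => hnot ((show v = ⟨4 * j + 3, h⟩ from Fin.ext he) ▸ hv)
    have := hmod v hv hv3
    omega

theorem pathPruned_succ_of_le {j : ℕ} (h : n ≤ 4 * j + 3) :
    pathPruned n (j + 1) = pathPruned n j := by
  ext σ
  exact and_congr_right fun _ => forall₂_congr fun v _ => by omega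

theorem insert_mem_pathPruned {i j : ℕ} {σ : Finset (Fin n)} (hσ : σ ∈ pathPruned n j)
    (hi : 4 * i < n) (hij : i ≤ j)
    (hnext : ∀ b ∈ σ, ∀ c ∈ σ, ¬(4 * i + 1 = b.val ∧ b.val + 1 = c.val)) :
    insert ⟨4 * i, hi⟩ σ ∈ pathPruned n j := by
  obtain ⟨hF, hmod⟩ := hσ
  have hprev (x : Fin n) (hx : x ∈ σ) : x.val + 1 ≠ 4 * i := fun h => by
    have := hmod x hx (by omega)
    omega
  refine ⟨mem_forestComplex_one_pathGraph_iff.2 fun a ha b hb c hc ⟨hab, hbc⟩ => ?_, ?_⟩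
  · rw [mem_forestComplex_one_pathGraph_iff] at hF
    simp only [mem_insert, Fin.ext_iff] at ha hb hc
    rcases hb with hb | hb
    · rcases ha with ha | ha
      exacts [by omega, hprev a ha (by omega)]
    rcases hc with hc | hc
    · exact hprev b hb (by omega)
    rcases ha with ha | ha
    exacts [hnext b hb c hc ⟨by omega, hbc⟩, hF a ha b hb c hc ⟨hab, hbc⟩]
  · intro v hv hv3
    rcases mem_insert.1 hv with rfl | hv
    · simp at hv3
    · exact hmod v hv hv3

theorem nonempty_homotopyEquiv_pathPruned (j : ℕ) :
    Nonempty (realization (forestComplex (pathGraph n) 1) ≃ₕ realization (pathPruned n j)) := by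
  induction j with
  | zero => exact pathPruned_zero (n := n) ▸ ⟨.refl _⟩
  | succ j ih =>
    obtain ⟨e⟩ := ih
    by_cases h : 4 * j + 3 < n
    · obtain ⟨e'⟩ := realization.nonempty_homotopyEquiv_deleteVertex (v := ⟨4 * j + 3, h⟩)
        (u := ⟨4 * j, by omega⟩) (by simp [Fin.ext_iff]) (isLowerSet_pathPruned j)
        fun σ hσ hv => insert_mem_pathPruned hσ (by omega) le_rfl fun b hb c hc hbc =>
          mem_forestComplex_one_pathGraph_iff.1 hσ.1 b hb c hc _ hv ⟨hbc.2, by simp; omega⟩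
      rw [pathPruned_succ h]
      exact ⟨e.trans e'⟩
    · rw [pathPruned_succ_of_le (by omega)]
      exact ⟨e⟩

theorem contractibleSpace_realization_forestComplex_one_pathGraph (hn : n % 4 = 1 ∨ n % 4 = 2) :
    ContractibleSpace (realization (forestComplex (pathGraph n) 1)) := by
  obtain ⟨e⟩ := nonempty_homotopyEquiv_pathPruned (n := n) n
  have : ContractibleSpace (realization (pathPruned n n)) :=
    realization.contractibleSpace_of_cone ⟨4 * (n / 4), by omega⟩
      (fun σ hσ => insert_mem_pathPruned hσ _ (Nat.div_le_self n 4) fun b _ c _ hbc => by omega)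
      ⟨∅, by simp [pathPruned, mem_forestComplex_one_pathGraph_iff]⟩
  exact e.contractibleSpace

def pathBlock (n : ℕ) (p : Fin ((n + 1) / 4) × Fin 3) : Fin n :=
  ⟨4 * p.1 + p.2, by have := p.1.isLt; have := p.2.isLt; omega⟩

theorem pathBlock_injective (n : ℕ) : Injective (pathBlock n) := by
  rintro ⟨k, j⟩ ⟨k', j'⟩ h
  have := congrArg Fin.val h
  simp only [pathBlock] at this
  have := j.isLt
  have := j'.isLt
  simp only [Prod.mk.injEq, Fin.ext_iff]
  omega

theorem pathPruned_self_eq_simplexBoundaryJoin (hn : n % 4 = 0 ∨ n % 4 = 3) :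
    pathPruned n n = simplexBoundaryJoin (pathBlock n) := by
  ext σ
  rw [mem_pathPruned_self, mem_forestComplex_one_pathGraph_iff]
  constructor
  · rintro ⟨hF, hmod⟩
    refine ⟨fun v hv => ?_, fun k => ?_⟩
    · have := hmod v hv
      have := v.isLt
      exact ⟨(⟨v / 4, by omega⟩, ⟨v % 4, by omega⟩), Fin.ext (by simp [pathBlock]; omega)⟩
    · by_contra! hfull
      exact hF _ (hfull 0) _ (hfull 1) _ (hfull 2) ⟨by simp [pathBlock], by simp [pathBlock]⟩
  · rintro ⟨hσβ, hmiss⟩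
    have hmod (v : Fin n) (hv : v ∈ σ) : v.val % 4 ≠ 3 := by
      obtain ⟨⟨k, j⟩, rfl⟩ := hσβ hv
      have := j.isLt
      simp [pathBlock]
      omega
    refine ⟨fun a ha b hb c hc ⟨hab, hbc⟩ => ?_, hmod⟩
    obtain ⟨⟨k, j⟩, rfl⟩ := hσβ ha
    have hb3 := hmod _ hb
    have hc3 := hmod _ hc
    have ha4 : (pathBlock n (k, j)).val = 4 * k + j := rfl
    have hj := j.isLt
    have hblock (j' : Fin 3) : pathBlock n (k, j') ∈ σ := by
      have hj' := j'.isLt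
      obtain h | h | h : j'.val = 0 ∨ j'.val = 1 ∨ j'.val = 2 := by omega
      · convert ha using 1; exact Fin.ext (by simp [pathBlock]; omega)
      · convert hb using 1; exact Fin.ext (by simp [pathBlock]; omega)
      · convert hc using 1; exact Fin.ext (by simp [pathBlock]; omega)
    obtain ⟨j', hj'⟩ := hmiss k
    exact hj' (hblock j')

theorem nonempty_homotopyEquiv_sphere_forestComplex_one_pathGraph (hn : n % 4 = 0 ∨ n % 4 = 3)
    {q : ℕ} (hq : 2 * ((n + 1) / 4) = q + 1) :
    Nonempty (realization (forestComplex (pathGraph n) 1) ≃ₕ Sphere q) := by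
  obtain ⟨e₁⟩ := nonempty_homotopyEquiv_pathPruned (n := n) n
  obtain ⟨e₂⟩ := realization.nonempty_homeomorph_sphere_simplexBoundaryJoin (pathBlock_injective n)
  obtain ⟨e₃⟩ := EuclideanSpace.nonempty_homeomorph_sphere_of_card_eq (ι' := Fin (q + 1))
    (ι := Fin ((n + 1) / 4) × Fin 2) (by simp; omega)
  rw [pathPruned_self_eq_simplexBoundaryJoin hn] at e₁
  exact ⟨e₁.trans (e₂.trans e₃).toHomotopyEquiv⟩

end PathGraph

/-- The homotopy type of `F_1(P_n)`: a sphere `S^{2r−1}` for `n = 4r` (`r ≥ 1`), a point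
for `n = 4r+1` and `n = 4r+2`, and a sphere `S^{2r+1}` for `n = 4r+3`. -/
theorem forestComplex_one_pathGraph (r : ℕ) :
    (1 ≤ r → Nonempty (ContinuousMap.HomotopyEquiv
      (realization (forestComplex (SimpleGraph.pathGraph (4 * r)) 1)) (Sphere (2 * r - 1)))) ∧
    ContractibleSpace (realization (forestComplex (SimpleGraph.pathGraph (4 * r + 1)) 1)) ∧
    ContractibleSpace (realization (forestComplex (SimpleGraph.pathGraph (4 * r + 2)) 1)) ∧
    Nonempty (ContinuousMap.HomotopyEquiv
      (realization (forestComplex (SimpleGraph.pathGraph (4 * r + 3)) 1)) (Sphere (2 * r + 1))) :=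
  ⟨fun hr => nonempty_homotopyEquiv_sphere_forestComplex_one_pathGraph (by omega) (by omega),
    contractibleSpace_realization_forestComplex_one_pathGraph (by omega),
    contractibleSpace_realization_forestComplex_one_pathGraph (by omega),
    nonempty_homotopyEquiv_sphere_forestComplex_one_pathGraph (by omega) (by omega)⟩
end
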